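/- arXiv:2010.08936 — 2 statements merged into one kernel-verified Lean document; each statement's English description precedes it below -/
import Mathlib

section
/- A minimal densest subgraph has no cut vertex: if H is a connected subgraph of G whose density g(H)=m(H)/(n(H)-1) is maximum among all connected subgraphs of G, and no proper connected subgraph of H attains this maximum density, then H is 2-connected (has no cut vertex). -/
open scoped BigOperators

variable {V : Type*}

/-- Density of a subgraph: m(H)/(n(H)-1). -/
noncomputable def density (G : SimpleGraph V) (H : G.Subgraph) : ℝ :=
  (H.edgeSet.ncard : ℝ) / ((H.verts.ncard : ℝ) - 1)

/-- Fractional arboricity: maximum density over connected subgraphs. -/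
noncomputable def fracArboricity (G : SimpleGraph V) : ℝ :=
  sSup {d : ℝ | ∃ H : G.Subgraph, H.Connected ∧ d = density G H}

/-- A densest subgraph: connected, attaining the maximum density. -/
def IsDensest (G : SimpleGraph V) (H : G.Subgraph) : Prop :=
  H.Connected ∧ density G H = fracArboricity G

/-- A minimal densest subgraph: no proper subgraph is densest. -/
def IsMinimalDensest (G : SimpleGraph V) (H : G.Subgraph) : Prop :=
  IsDensest G H ∧ ∀ K : G.Subgraph, K < H → ¬ IsDensest G K

/-!
If `v` were a cut vertex of `H`, then `H` would be the union of two connected proper subgraphs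
`H₁`, `H₂` meeting only in `v`. Their edge counts add up, and so do their values of `n - 1`, so
`g(H)` is a mediant of `g(H₁)` and `g(H₂)` and one of them is at least `g(H)`: that one is then
densest, contradicting minimality.
-/

open SimpleGraph

theorem add_div_add_le_max_div {α : Type*} [Field α] [LinearOrder α] [IsStrictOrderedRing α]
    {a b c d : α} (hc : 0 < c) (hd : 0 < d) :
    (a + b) / (c + d) ≤ max (a / c) (b / d) := by
  rw [div_le_iff₀ (add_pos hc hd), mul_add]
  exact add_le_add ((div_le_iff₀ hc).1 (le_max_left _ _)) ((div_le_iff₀ hd).1 (le_max_right _ _))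

namespace SimpleGraph.Subgraph

variable {G : SimpleGraph V}

theorem nonempty_verts_sdiff_singleton {H : G.Subgraph} (hH : H.edgeSet.Nonempty) (v : V) :
    (H.verts \ {v}).Nonempty := by
  obtain ⟨e, he⟩ := hH
  induction e using Sym2.ind with
  | _ x y =>
    rw [Subgraph.mem_edgeSet] at he
    by_cases hx : x = v
    · exact ⟨y, H.edge_vert he.symm, fun hy => G.ne_of_adj (H.adj_sub he) (hx.trans hy.symm)⟩
    · exact ⟨x, H.edge_vert he, hx⟩

theorem disjoint_edgeSet_of_subsingleton_inter_verts {H₁ H₂ : G.Subgraph}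
    (h : (H₁.verts ∩ H₂.verts).Subsingleton) : Disjoint H₁.edgeSet H₂.edgeSet := by
  rw [Set.disjoint_left]
  intro e he₁ he₂
  induction e using Sym2.ind with
  | _ x y =>
    rw [Subgraph.mem_edgeSet] at he₁ he₂
    exact G.ne_of_adj (H₁.adj_sub he₁)
      (h ⟨H₁.edge_vert he₁, H₂.edge_vert he₂⟩ ⟨H₁.edge_vert he₁.symm, H₂.edge_vert he₂.symm⟩)

theorem induce_sup_induce_eq_self {H : G.Subgraph} {s t : Set V} (hst : s ∪ t = H.verts)
    (hadj : ∀ x y, H.Adj x y → (x ∈ s ∧ y ∈ s) ∨ (x ∈ t ∧ y ∈ t)) :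
    H.induce s ⊔ H.induce t = H := by
  ext x y
  · simp [hst]
  · simp only [sup_adj, induce_adj]
    constructor
    · rintro (⟨-, -, h⟩ | ⟨-, -, h⟩) <;> exact h
    · intro h
      rcases hadj x y h with ⟨hx, hy⟩ | ⟨hx, hy⟩
      · exact .inl ⟨hx, hy, h⟩
      · exact .inr ⟨hx, hy, h⟩

theorem exists_adj_closed_of_not_preconnected {K : G.Subgraph} (hK : ¬K.Preconnected) :
    ∃ U ⊆ K.verts, U.Nonempty ∧ (K.verts \ U).Nonempty ∧ ∀ x ∈ U, ∀ y, K.Adj x y → y ∈ U := by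
  rw [Subgraph.preconnected_iff, SimpleGraph.Preconnected] at hK
  push Not at hK
  obtain ⟨a, b, hab⟩ := hK
  refine ⟨{x | ∃ hx : x ∈ K.verts, K.coe.Reachable a ⟨x, hx⟩}, fun x hx => hx.1,
    ⟨a, a.2, .rfl⟩, ⟨b, b.2, fun hb => hab hb.2⟩, ?_⟩
  rintro x ⟨hx, hax⟩ y hxy
  exact ⟨K.edge_vert hxy.symm, hax.trans (Adj.reachable (G := K.coe) hxy)⟩

/-- Walks of `H` leaving a set `U` closed under `H`-adjacency up to `v` must pass through `v`. -/
theorem exists_walk_to_le_induce_insert {H : G.Subgraph} {v : V} {U : Set V}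
    (hU : ∀ x ∈ U, ∀ y, H.Adj x y → y ∈ insert v U) {x y : V} (p : G.Walk x y)
    (hp : p.toSubgraph ≤ H) (hx : x ∈ U) (hy : y ∉ U) :
    ∃ q : G.Walk x v, q.toSubgraph ≤ H.induce (insert v U) := by
  induction p with
  | nil => exact absurd hx hy
  | @cons x z y h p ih =>
    rw [Walk.toSubgraph, sup_le_iff, subgraphOfAdj_le_iff] at hp
    rcases hU x hx z hp.1 with rfl | hz
    · exact ⟨h.toWalk, by
        rw [Adj.toSubgraph_toWalk, subgraphOfAdj_le_iff]
        exact ⟨.inr hx, .inl rfl, hp.1⟩⟩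
    · obtain ⟨q, hq⟩ := ih hp.2 hz hy
      refine ⟨.cons h q, ?_⟩
      rw [Walk.toSubgraph, sup_le_iff, subgraphOfAdj_le_iff]
      exact ⟨⟨.inr hx, .inr hz, hp.1⟩, hq⟩

theorem connected_induce_insert {H : G.Subgraph} (hH : H.Connected) {v : V} (hv : v ∈ H.verts)
    {U : Set V} (hUH : U ⊆ H.verts) (hvU : v ∉ U)
    (hU : ∀ x ∈ U, ∀ y, H.Adj x y → y ∈ insert v U) :
    (H.induce (insert v U)).Connected := by
  rw [connected_iff_forall_exists_walk_subgraph] at hH ⊢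
  have to_v : ∀ x ∈ insert v U, ∃ p : G.Walk x v, p.toSubgraph ≤ H.induce (insert v U) := by
    rintro x (rfl | hx)
    · exact ⟨.nil, by simp [Walk.toSubgraph, singletonSubgraph_le_iff]⟩
    · obtain ⟨p, hp⟩ := hH.2 (hUH hx) hv
      exact exists_walk_to_le_induce_insert hU p hp hx hvU
  refine ⟨⟨v, .inl rfl⟩, fun hx hy => ?_⟩
  obtain ⟨p, hp⟩ := to_v _ hx
  obtain ⟨q, hq⟩ := to_v _ hy
  refine ⟨p.append q.reverse, ?_⟩
  rw [Walk.toSubgraph_append, Walk.toSubgraph_reverse]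
  exact sup_le hp hq

theorem adj_mem_insert_of_adj_closed_deleteVerts {H : G.Subgraph} {v : V} {S : Set V}
    (hS : S ⊆ H.verts \ {v}) (hSc : ∀ x ∈ S, ∀ y, (H.deleteVerts {v}).Adj x y → y ∈ S) :
    ∀ x ∈ S, ∀ y, H.Adj x y → y ∈ insert v S := by
  intro x hx y hxy
  by_cases hy : y = v
  · exact .inl hy
  · exact .inr (hSc x hx y (deleteVerts_adj.2
      ⟨H.edge_vert hxy, (hS hx).2, H.edge_vert hxy.symm, hy, hxy⟩))

theorem exists_sup_eq_of_not_connected_deleteVerts {H : G.Subgraph} (hH : H.Connected) {v : V}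
    (hv : v ∈ H.verts) (hnt : (H.verts \ {v}).Nonempty) (hcut : ¬(H.deleteVerts {v}).Connected) :
    ∃ H₁ H₂ : G.Subgraph, H₁.Connected ∧ H₂.Connected ∧ H₁ ⊔ H₂ = H ∧
      H₁.verts ∩ H₂.verts = {v} ∧ ¬H₁.verts ⊆ H₂.verts ∧ ¬H₂.verts ⊆ H₁.verts := by
  have hK : ¬(H.deleteVerts {v}).Preconnected := fun h =>
    hcut (Subgraph.connected_iff.2 ⟨h, by rwa [deleteVerts_verts]⟩)
  obtain ⟨U, hUK, ⟨a, ha⟩, ⟨b, hbK, hbU⟩, hU⟩ := exists_adj_closed_of_not_preconnected hK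
  rw [deleteVerts_verts] at hUK hbK
  set W := (H.verts \ {v}) \ U
  have hW : ∀ x ∈ W, ∀ y, (H.deleteVerts {v}).Adj x y → y ∈ W := fun x hx y hxy =>
    ⟨(H.deleteVerts {v}).edge_vert hxy.symm, fun hy => hx.2 (hU y hy x hxy.symm)⟩
  have hvU : v ∉ U := fun h => (hUK h).2 rfl
  have hvW : v ∉ W := fun h => h.1.2 rfl
  have hUH := adj_mem_insert_of_adj_closed_deleteVerts hUK hU
  have hWH := adj_mem_insert_of_adj_closed_deleteVerts Set.sdiff_subset hW
  refine ⟨H.induce (insert v U), H.induce (insert v W),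
    connected_induce_insert hH hv (fun x hx => (hUK hx).1) hvU hUH,
    connected_induce_insert hH hv (fun x hx => hx.1.1) hvW hWH,
    induce_sup_induce_eq_self ?_ ?_, ?_, ?_, ?_⟩
  · rw [← Set.insert_union_distrib, Set.union_sdiff_cancel hUK, Set.insert_sdiff_singleton,
      Set.insert_eq_of_mem hv]
  · intro x y hxy
    rcases eq_or_ne x v with rfl | hx
    · have hy : y ∈ H.verts \ {x} := ⟨H.edge_vert hxy.symm, (G.ne_of_adj (H.adj_sub hxy)).symm⟩
      by_cases hyU : y ∈ U
      · exact .inl ⟨.inl rfl, .inr hyU⟩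
      · exact .inr ⟨.inl rfl, .inr ⟨hy, hyU⟩⟩
    · by_cases hxU : x ∈ U
      · exact .inl ⟨.inr hxU, hUH x hxU y hxy⟩
      · have hxW : x ∈ W := ⟨⟨H.edge_vert hxy, hx⟩, hxU⟩
        exact .inr ⟨.inr hxW, hWH x hxW y hxy⟩
  · rw [induce_verts, induce_verts, ← Set.insert_inter_distrib, Set.inter_sdiff_self,
      insert_empty_eq]
  · exact fun h => (h (.inr ha)).elim (fun hav => hvU (hav ▸ ha)) fun haW => haW.2 ha
  · exact fun h => (h (.inr ⟨hbK, hbU⟩)).elim (fun hbv => hbK.2 hbv) hbU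

end SimpleGraph.Subgraph

section Density

variable {G : SimpleGraph V}

theorem density_le_ncard_edgeSet (H : G.Subgraph) : density G H ≤ H.edgeSet.ncard := by
  have hm : (0 : ℝ) ≤ H.edgeSet.ncard := Nat.cast_nonneg _
  rcases le_or_gt H.verts.ncard 1 with hn | hn
  · have hn' : (H.verts.ncard : ℝ) - 1 ≤ 0 := by
      have : (H.verts.ncard : ℝ) ≤ 1 := by exact_mod_cast hn
      linarith
    exact (div_nonpos_of_nonneg_of_nonpos hm hn').trans hm
  · have hn' : (1 : ℝ) ≤ H.verts.ncard - 1 := by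
      have : (2 : ℝ) ≤ H.verts.ncard := by exact_mod_cast hn
      linarith
    exact div_le_self hm hn'

theorem density_le_fracArboricity [Finite V] {H : G.Subgraph} (hH : H.Connected) :
    density G H ≤ fracArboricity G := by
  refine le_csSup ⟨Nat.card (Sym2 V), ?_⟩ ⟨H, hH, rfl⟩
  rintro _ ⟨K, -, rfl⟩
  exact (density_le_ncard_edgeSet K).trans (by exact_mod_cast Set.ncard_le_card _)

theorem one_lt_ncard_verts_of_inter_eq_singleton [Finite V] {H₁ H₂ : G.Subgraph} {v : V}
    (hv : H₁.verts ∩ H₂.verts = {v}) (h : ¬H₁.verts ⊆ H₂.verts) : 1 < H₁.verts.ncard := by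
  obtain ⟨u, hu₁, hu₂⟩ := Set.not_subset.1 h
  have hv' : v ∈ H₁.verts ∩ H₂.verts := by simp [hv]
  exact (Set.one_lt_ncard_iff (Set.toFinite _)).2 ⟨u, v, hu₁, hv'.1, fun huv => hu₂ (huv ▸ hv'.2)⟩

theorem density_sup_le_max [Finite V] {H₁ H₂ : G.Subgraph} {v : V}
    (hv : H₁.verts ∩ H₂.verts = {v}) (h₁ : ¬H₁.verts ⊆ H₂.verts) (h₂ : ¬H₂.verts ⊆ H₁.verts) :
    density G (H₁ ⊔ H₂) ≤ max (density G H₁) (density G H₂) := by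
  have hm : (H₁ ⊔ H₂).edgeSet.ncard = H₁.edgeSet.ncard + H₂.edgeSet.ncard := by
    have hdisj := Subgraph.disjoint_edgeSet_of_subsingleton_inter_verts
      (hv ▸ Set.subsingleton_singleton : (H₁.verts ∩ H₂.verts).Subsingleton)
    rw [Subgraph.edgeSet_sup, Set.ncard_union_eq hdisj]
  have hn : (H₁ ⊔ H₂).verts.ncard + 1 = H₁.verts.ncard + H₂.verts.ncard := by
    rw [Subgraph.verts_sup, ← Set.ncard_union_add_ncard_inter, hv, Set.ncard_singleton]
  have hn₁ : (1 : ℝ) < H₁.verts.ncard := by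
    exact_mod_cast one_lt_ncard_verts_of_inter_eq_singleton hv h₁
  have hn₂ : (1 : ℝ) < H₂.verts.ncard := by
    exact_mod_cast one_lt_ncard_verts_of_inter_eq_singleton (Set.inter_comm _ _ ▸ hv) h₂
  have hn' : ((H₁ ⊔ H₂).verts.ncard : ℝ) - 1 = (H₁.verts.ncard - 1) + (H₂.verts.ncard - 1) := by
    have : ((H₁ ⊔ H₂).verts.ncard : ℝ) + 1 = H₁.verts.ncard + H₂.verts.ncard := by
      exact_mod_cast hn
    linarith
  rw [density, hm, Nat.cast_add, hn']
  exact add_div_add_le_max_div (by linarith) (by linarith)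

end Density

theorem minimalDensest_no_cut_vertex_general [Fintype V] (G : SimpleGraph V)
    (H : G.Subgraph) (hmin : IsMinimalDensest G H) (hne : H.edgeSet.Nonempty)
    (v : V) (hv : v ∈ H.verts) :
    (H.deleteVerts {v}).Connected := by
  obtain ⟨⟨hH, hdens⟩, hproper⟩ := hmin
  by_contra hcut
  obtain ⟨H₁, H₂, hH₁, hH₂, rfl, hv₁₂, h₁₂, h₂₁⟩ :=
    Subgraph.exists_sup_eq_of_not_connected_deleteVerts hH hv
      (Subgraph.nonempty_verts_sdiff_singleton hne v) hcut
  have hmax := hdens ▸ density_sup_le_max hv₁₂ h₁₂ h₂₁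
  rcases le_max_iff.1 hmax with h | h
  · exact hproper H₁ (left_lt_sup.2 fun h₂ => h₂₁ h₂.1)
      ⟨hH₁, (density_le_fracArboricity hH₁).antisymm h⟩
  · exact hproper H₂ (right_lt_sup.2 fun h₁ => h₁₂ h₁.1)
      ⟨hH₂, (density_le_fracArboricity hH₂).antisymm h⟩

/-- a minimal densest subgraph has no cut vertex. -/
theorem minimalDensest_no_cut_vertex [Fintype V] (G : SimpleGraph V) (hG : G.Connected)
    (H : G.Subgraph) (hmin : IsMinimalDensest G H) (hne : H.edgeSet.Nonempty)
    (v : V) (hv : v ∈ H.verts) :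
    (H.deleteVerts {v}).Connected :=
  minimalDensest_no_cut_vertex_general G H hmin hne v hv
end

section
/- The core of the arboricity game equals the set of nonnegative vectors x on the edges with x(E) = a(G) and x(T) ≤ 1 for every spanning tree T of G. -/
open scoped BigOperators

variable {V : Type*}

/-- A set of edges is a forest if the graph it spans is acyclic. -/
def IsForestEdgeSet (F : Set (Sym2 V)) : Prop :=
  (SimpleGraph.fromEdgeSet F).IsAcyclic

/-- Arboricity of an edge set: minimum number of forests covering it. -/
noncomputable def arboricity (S : Set (Sym2 V)) : ℕ :=
  sInf {k : ℕ | ∃ F : Fin k → Set (Sym2 V),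
    (∀ i, IsForestEdgeSet (F i)) ∧ S ⊆ ⋃ i, F i}

/-- A spanning tree of `G`, as a subgraph. -/
def IsSpanningTree (G : SimpleGraph V) (T : G.Subgraph) : Prop :=
  T.IsSpanning ∧ T.coe.IsTree

/-- Membership in the core of the arboricity game on `G`:
nonnegative, efficient, and no coalition pays more than its arboricity. -/
def inCore (G : SimpleGraph V) (x : Sym2 V → ℝ) : Prop :=
  (∀ e, 0 ≤ x e) ∧ (∑ᶠ e ∈ G.edgeSet, x e) = (arboricity G.edgeSet : ℝ) ∧
    ∀ S : Set (Sym2 V), S ⊆ G.edgeSet → (∑ᶠ e ∈ S, x e) ≤ (arboricity S : ℝ)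

/-! A spanning tree is a forest, so a core vector pays at most `1` on it. Conversely, in a
connected graph every forest extends to a spanning tree, so for `x ≥ 0` the tree inequalities
give `x(F) ≤ 1` on every forest `F`; covering a coalition `S` by `a(S)` forests then yields
`x(S) ≤ a(S)`. -/

open SimpleGraph

theorem finsum_mem_le_finsum_mem_of_subset {α M : Type*} [AddCommMonoid M] [PartialOrder M]
    [IsOrderedAddMonoid M] {f : α → M} (hf : 0 ≤ f) {s t : Set α} (hst : s ⊆ t)
    (ht : t.Finite) : ∑ᶠ a ∈ s, f a ≤ ∑ᶠ a ∈ t, f a := by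
  rw [← finsum_mem_add_sdiff hst ht]
  exact le_add_of_nonneg_right (finsum_nonneg fun a => finsum_nonneg fun _ => hf a)

theorem finsum_mem_le_sum_finsum_mem_inter {ι α M : Type*} [Fintype ι] [AddCommMonoid M]
    [PartialOrder M] [IsOrderedAddMonoid M] {f : α → M} (hf : 0 ≤ f) {s : Set α}
    (hs : s.Finite) {t : ι → Set α} (hst : s ⊆ ⋃ i, t i) :
    ∑ᶠ a ∈ s, f a ≤ ∑ i, ∑ᶠ a ∈ s ∩ t i, f a := by
  simp_rw [finsum_mem_def (s ∩ _), ← Set.indicator_indicator, ← finsum_mem_def,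
    finsum_mem_eq_finite_toFinset_sum _ hs]
  rw [Finset.sum_comm]
  refine Finset.sum_le_sum fun a ha => ?_
  obtain ⟨i, hi⟩ := Set.mem_iUnion.1 (hst (hs.mem_toFinset.1 ha))
  calc f a = (t i).indicator f a := (Set.indicator_of_mem hi f).symm
    _ ≤ ∑ j, (t j).indicator f a :=
      Finset.single_le_sum (fun j _ => Set.indicator_nonneg (fun b _ => hf b) a)
        (Finset.mem_univ i)

theorem isForestEdgeSet_edgeSet {H : SimpleGraph V} :
    IsForestEdgeSet H.edgeSet ↔ H.IsAcyclic := by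
  rw [IsForestEdgeSet, fromEdgeSet_edgeSet]

theorem IsForestEdgeSet.subset {F F' : Set (Sym2 V)} (hF : IsForestEdgeSet F) (h : F' ⊆ F) :
    IsForestEdgeSet F' :=
  hF.anti (fromEdgeSet_mono h)

theorem isForestEdgeSet_singleton (e : Sym2 V) : IsForestEdgeSet {e} := by
  induction e using Sym2.ind with
  | h u v =>
    change (edge u v).IsAcyclic
    by_cases huv : u = v
    · rw [huv, edge_self_eq_bot]
      exact isAcyclic_bot
    · simpa using isAcyclic_bot.sup_edge_of_not_reachable (G := ⊥) (u := u) (v := v)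
        (by simpa using huv)

theorem IsForestEdgeSet.arboricity_le_one {S : Set (Sym2 V)} (h : IsForestEdgeSet S) :
    arboricity S ≤ 1 :=
  Nat.sInf_le ⟨fun _ => S, fun _ => h, fun _ he => Set.mem_iUnion.2 ⟨0, he⟩⟩

theorem exists_isForestEdgeSet_cover_arboricity [Finite V] (S : Set (Sym2 V)) :
    ∃ F : Fin (arboricity S) → Set (Sym2 V),
      (∀ i, IsForestEdgeSet (F i)) ∧ S ⊆ ⋃ i, F i := by
  have : Fintype (Sym2 V) := Fintype.ofFinite _
  let enum := Fintype.equivFin (Sym2 V)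
  have hcover : {k : ℕ | ∃ F : Fin k → Set (Sym2 V),
      (∀ i, IsForestEdgeSet (F i)) ∧ S ⊆ ⋃ i, F i}.Nonempty :=
    ⟨_, fun i => {enum.symm i}, fun _ => isForestEdgeSet_singleton _,
      fun e _ => Set.mem_iUnion.2 ⟨enum e, by simp⟩⟩
  exact Nat.sInf_mem hcover

theorem IsSpanningTree.isForestEdgeSet {G : SimpleGraph V} {T : G.Subgraph}
    (hT : IsSpanningTree G T) : IsForestEdgeSet T.edgeSet := by
  rw [← T.edgeSet_spanningCoe, isForestEdgeSet_edgeSet,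
    (T.spanningCoeEquivCoeOfSpanning hT.1).isAcyclic_iff]
  exact hT.2.isAcyclic

theorem SimpleGraph.Connected.exists_isSpanningTree_superset {G : SimpleGraph V}
    (hG : G.Connected) {F : Set (Sym2 V)} (hFG : F ⊆ G.edgeSet) (hF : IsForestEdgeSet F) :
    ∃ T : G.Subgraph, IsSpanningTree G T ∧ F ⊆ T.edgeSet := by
  have hFle : fromEdgeSet F ≤ G := by
    simpa only [fromEdgeSet_edgeSet] using fromEdgeSet_mono hFG
  obtain ⟨T, hFT, hTG, hT⟩ := hG.exists_isTree_le_of_le_of_isAcyclic hFle hF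
  have hspan := SimpleGraph.toSubgraph.isSpanning T hTG
  have hTree : (SimpleGraph.toSubgraph T hTG).coe.IsTree :=
    (Subgraph.spanningCoeEquivCoeOfSpanning _ hspan).isTree_iff.1 hT
  refine ⟨SimpleGraph.toSubgraph T hTG, ⟨hspan, hTree⟩, fun e he => edgeSet_mono hFT ?_⟩
  rw [edgeSet_fromEdgeSet]
  exact ⟨he, G.not_isDiag_of_mem_edgeSet (hFG he)⟩

theorem finsum_mem_le_one_of_isForestEdgeSet [Finite V] {G : SimpleGraph V} (hG : G.Connected)
    {x : Sym2 V → ℝ} (hx : 0 ≤ x)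
    (htree : ∀ T : G.Subgraph, IsSpanningTree G T → ∑ᶠ e ∈ T.edgeSet, x e ≤ 1)
    {F : Set (Sym2 V)} (hFG : F ⊆ G.edgeSet) (hF : IsForestEdgeSet F) :
    ∑ᶠ e ∈ F, x e ≤ 1 := by
  obtain ⟨T, hT, hFT⟩ := hG.exists_isSpanningTree_superset hFG hF
  exact (finsum_mem_le_finsum_mem_of_subset hx hFT T.edgeSet.toFinite).trans (htree T hT)

theorem finsum_mem_le_arboricity [Finite V] {x : Sym2 V → ℝ} (hx : 0 ≤ x) {S : Set (Sym2 V)}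
    (hforest : ∀ F ⊆ S, IsForestEdgeSet F → ∑ᶠ e ∈ F, x e ≤ 1) :
    ∑ᶠ e ∈ S, x e ≤ arboricity S := by
  obtain ⟨F, hF, hSF⟩ := exists_isForestEdgeSet_cover_arboricity S
  calc ∑ᶠ e ∈ S, x e ≤ ∑ i, ∑ᶠ e ∈ S ∩ F i, x e :=
        finsum_mem_le_sum_finsum_mem_inter hx S.toFinite hSF
    _ ≤ ∑ _i : Fin (arboricity S), (1 : ℝ) :=
        Finset.sum_le_sum fun i _ => hforest _ Set.inter_subset_left
          ((hF i).subset Set.inter_subset_right)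
    _ = arboricity S := by simp

/-- the core of the arboricity game equals the set of nonnegative
vectors with x(E) = a(G) and x(T) ≤ 1 for every spanning tree T. -/
theorem core_spanning_tree_characterization [Fintype V] (G : SimpleGraph V)
    (hG : G.Connected) (x : Sym2 V → ℝ) :
    inCore G x ↔
      ((∀ e, 0 ≤ x e) ∧ (∑ᶠ e ∈ G.edgeSet, x e) = (arboricity G.edgeSet : ℝ) ∧
        ∀ T : G.Subgraph, IsSpanningTree G T → (∑ᶠ e ∈ T.edgeSet, x e) ≤ 1) := by
  refine and_congr_right fun hx => and_congr_right fun _ =>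
    ⟨fun hcore T hT => ?_, fun htree S hS => ?_⟩
  · calc ∑ᶠ e ∈ T.edgeSet, x e ≤ arboricity T.edgeSet := hcore _ T.edgeSet_subset
      _ ≤ 1 := mod_cast hT.isForestEdgeSet.arboricity_le_one
  · exact finsum_mem_le_arboricity hx fun F hFS hF =>
      finsum_mem_le_one_of_isForestEdgeSet hG hx htree (hFS.trans hS) hF
end
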